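/- For any symbol S of odd defect d = 2δ+1, the rank of the core symbol S_δ = ((0,1,...,2δ), ∅) satisfies rk(S_δ) = δ(δ+1), and rk(S_δ) ≤ rk(S), with equality if and only if S equals S_δ (up to shift). -/

import Mathlib

/-- A symbol consists of two strictly increasing finite sequences of nonnegative integers. -/
def IsSymbol (X Y : List ℕ) : Prop := X.Chain' (· < ·) ∧ Y.Chain' (· < ·)

/-- The shift operation on a symbol: prepend `0` and add `1` to every entry, in each row. -/
def shiftS (S : List ℕ × List ℕ) : List ℕ × List ℕ :=
  (0 :: S.1.map (· + 1), 0 :: S.2.map (· + 1))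

/-- The rank of a symbol: the sum of all entries minus `⌊(#S - 1)^2 / 4⌋`. -/
def rkS (S : List ℕ × List ℕ) : ℤ :=
  (S.1.sum + S.2.sum : ℤ) - ((S.1.length + S.2.length : ℤ) - 1) ^ 2 / 4

/-- The defect of a symbol: `#X - #Y`. -/
def defectS (S : List ℕ × List ℕ) : ℤ := (S.1.length : ℤ) - S.2.length

/-- Shift-equivalence of symbols: the equivalence relation generated by `S ∼ shift S`. -/
def symEquiv : List ℕ × List ℕ → List ℕ × List ℕ → Prop :=
  Relation.EqvGen (fun S T => T = shiftS S)

/-- The core symbol `S_δ = ((0, 1, …, 2δ), ∅)`. -/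
def coreSymbol (δ : ℕ) : List ℕ × List ℕ := (List.range (2 * δ + 1), [])

/-!
Shifting a symbol does not change its rank, and the correction term `⌊(#S - 1)² / 4⌋` only
depends on the row lengths. A strictly increasing row of length `m` dominates `(0, 1, …, m - 1)`
entrywise, so among symbols with given row lengths the rank is smallest exactly for
`((0, …, #X - 1), (0, …, #Y - 1))`; for defect `2δ + 1` this is the `#Y`-fold shift of `S_δ`.
-/

theorem List.sum_range'_le_sum {l : List ℕ} {k : ℕ} (hl : l.Pairwise (· < ·))
    (hk : ∀ x ∈ l, k ≤ x) : (List.range' k l.length).sum ≤ l.sum := by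
  induction l generalizing k with
  | nil => simp
  | cons a t ih =>
    obtain ⟨hat, ht⟩ := List.pairwise_cons.1 hl
    have hka : k ≤ a := hk a List.mem_cons_self
    have := ih ht (k := k + 1) fun x hx => hka.trans_lt (hat x hx)
    simp only [List.length_cons, List.range'_succ, List.sum_cons]
    omega

theorem List.eq_range'_of_sum_eq {l : List ℕ} {k : ℕ} (hl : l.Pairwise (· < ·))
    (hk : ∀ x ∈ l, k ≤ x) (h : l.sum = (List.range' k l.length).sum) :
    l = List.range' k l.length := by
  induction l generalizing k with
  | nil => rfl
  | cons a t ih =>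
    obtain ⟨hat, ht⟩ := List.pairwise_cons.1 hl
    have hka : k ≤ a := hk a List.mem_cons_self
    have htk : ∀ x ∈ t, k + 1 ≤ x := fun x hx => hka.trans_lt (hat x hx)
    have := List.sum_range'_le_sum ht htk
    simp only [List.length_cons, List.range'_succ, List.sum_cons] at h ⊢
    obtain rfl : a = k := by omega
    exact congrArg (a :: ·) (ih ht htk (by omega))

theorem rkS_shiftS (S : List ℕ × List ℕ) : rkS (shiftS S) = rkS S := by
  have hsum (l : List ℕ) : (l.map (· + 1)).sum = l.sum + l.length := by
    simp [List.sum_map_add]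
  obtain ⟨X, Y⟩ := S
  simp only [rkS, shiftS, List.sum_cons, hsum, List.length_cons, List.length_map]
  push_cast
  have hsq : ((X.length : ℤ) + 1 + (Y.length + 1) - 1) ^ 2
      = (X.length + Y.length - 1) ^ 2 + (X.length + Y.length) * 4 := by
    ring
  rw [hsq, Int.add_mul_ediv_right _ _ four_ne_zero]
  ring

theorem rkS_eq_of_symEquiv {S T : List ℕ × List ℕ} (h : symEquiv S T) : rkS S = rkS T := by
  induction h with
  | rel _ _ hST => rw [hST, rkS_shiftS]
  | refl => rfl
  | symm _ _ _ ih => exact ih.symm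
  | trans _ _ _ _ _ ih₁ ih₂ => exact ih₁.trans ih₂

theorem rkS_sub_rkS_of_length_eq {X Y X' Y' : List ℕ} (hX : X.length = X'.length)
    (hY : Y.length = Y'.length) :
    rkS (X, Y) - rkS (X', Y') = ((X.sum : ℤ) - X'.sum) + ((Y.sum : ℤ) - Y'.sum) := by
  simp only [rkS, hX, hY]
  ring

theorem symEquiv_iterate_shiftS (S : List ℕ × List ℕ) (n : ℕ) : symEquiv (shiftS^[n] S) S := by
  induction n with
  | zero => exact .refl S
  | succ n ih =>
    rw [Function.iterate_succ_apply']
    exact .trans _ _ _ (.symm _ _ (.rel _ _ rfl)) ih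

theorem iterate_shiftS_coreSymbol (δ n : ℕ) :
    shiftS^[n] (coreSymbol δ) = (List.range (2 * δ + 1 + n), List.range n) := by
  induction n with
  | zero => rfl
  | succ n ih =>
    rw [Function.iterate_succ_apply', ih]
    simp [shiftS, ← add_assoc, List.range_succ_eq_map]

theorem rkS_coreSymbol (δ : ℕ) : rkS (coreSymbol δ) = δ * (δ + 1) := by
  have hsum : (List.range (2 * δ + 1)).sum = δ * (2 * δ + 1) := by
    rw [List.range_eq_range', List.sum_range']
    simp only [Nat.mul_zero, Nat.zero_add, Nat.mul_one, Nat.add_sub_cancel]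
    exact Nat.div_eq_of_eq_mul_left two_pos (by ring)
  have hsq : ((2 * δ + 1 : ℤ) + 0 - 1) ^ 2 = δ ^ 2 * 4 := by ring
  simp only [rkS, coreSymbol, hsum, List.sum_nil, List.length_nil, List.length_range]
  push_cast
  rw [hsq, Int.mul_ediv_cancel _ four_ne_zero]
  ring

/-- for any symbol `S` of odd defect `d = 2δ+1`, the core symbol
`S_δ = ((0,…,2δ), ∅)` has rank `δ(δ+1)`, and `rk(S_δ) ≤ rk(S)`, with equality if and
only if `S` equals `S_δ` up to shift. -/
theorem core_rank_minimal (δ : ℕ) :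
    rkS (coreSymbol δ) = (δ : ℤ) * (δ + 1) ∧
    ∀ X Y : List ℕ, IsSymbol X Y → defectS (X, Y) = 2 * (δ : ℤ) + 1 →
      rkS (coreSymbol δ) ≤ rkS (X, Y) ∧
      (rkS (X, Y) = rkS (coreSymbol δ) ↔ symEquiv (X, Y) (coreSymbol δ)) := by
  refine ⟨rkS_coreSymbol δ, fun X Y ⟨hX, hY⟩ hd => ?_⟩
  have hXp := List.isChain_iff_pairwise.1 hX
  have hYp := List.isChain_iff_pairwise.1 hY
  have hlen : X.length = 2 * δ + 1 + Y.length := by simp only [defectS] at hd; omega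
  have hT : symEquiv (List.range X.length, List.range Y.length) (coreSymbol δ) := by
    rw [hlen, ← iterate_shiftS_coreSymbol]
    exact symEquiv_iterate_shiftS _ _
  have hdiff := rkS_sub_rkS_of_length_eq (List.length_range (n := X.length)).symm
    (List.length_range (n := Y.length)).symm
  rw [rkS_eq_of_symEquiv hT] at hdiff
  simp only [List.range_eq_range'] at hT hdiff
  have hXle := List.sum_range'_le_sum hXp fun x _ => x.zero_le
  have hYle := List.sum_range'_le_sum hYp fun y _ => y.zero_le
  refine ⟨by omega, fun heq => ?_, rkS_eq_of_symEquiv⟩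
  rwa [List.eq_range'_of_sum_eq hXp (fun x _ => x.zero_le) (by omega),
    List.eq_range'_of_sum_eq hYp (fun y _ => y.zero_le) (by omega)]
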